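/- arXiv:1907.05563 — 2 statements merged into one kernel-verified Lean document; each statement's English description precedes it below -/
import Mathlib

section
/- With A(n)=n+2 and B(n)=(n+2)·∑_{i=2}^{n+2} (-1)^i/i!, the sequence A(n)/B(n) converges to e as n → ∞. -/
open Filter Finset Topology

theorem Real.hasSum_pow_div_factorial (x : ℝ) :
    HasSum (fun n : ℕ => x ^ n / (n.factorial : ℝ)) (Real.exp x) := by
  rw [Real.exp_eq_exp_ℝ]
  exact NormedSpace.expSeries_div_hasSum_exp x

-- The terms `i = 0, 1` of the series of `exp (-1)` are `1` and `-1`, so they cancel.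
theorem sum_Icc_two_neg_one_pow_div_factorial (n : ℕ) :
    ∑ i ∈ Icc 2 (n + 2), (-1 : ℝ) ^ i / (i.factorial : ℝ)
      = ∑ i ∈ range (n + 3), (-1 : ℝ) ^ i / (i.factorial : ℝ) := by
  induction n with
  | zero => simp [sum_range_succ]
  | succ n ih => rw [sum_Icc_succ_top (by omega), ih, sum_range_succ _ (n + 3)]

theorem tendsto_sum_Icc_two_neg_one_pow_div_factorial :
    Tendsto (fun n : ℕ => ∑ i ∈ Icc 2 (n + 2), (-1 : ℝ) ^ i / (i.factorial : ℝ))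
      atTop (𝓝 (Real.exp (-1))) := by
  simp only [sum_Icc_two_neg_one_pow_div_factorial]
  exact (Real.hasSum_pow_div_factorial (-1)).tendsto_sum_nat.comp (tendsto_add_atTop_nat 3)

theorem stmt4 :
    Filter.Tendsto (fun n : ℕ =>
      ((n : ℝ) + 2) /
        (((n : ℝ) + 2) * ∑ i ∈ Finset.Icc 2 (n + 2), (-1 : ℝ) ^ i / (Nat.factorial i : ℝ)))
      Filter.atTop (nhds (Real.exp 1)) := by
  have hinv := tendsto_sum_Icc_two_neg_one_pow_div_factorial.inv₀ (Real.exp_ne_zero (-1))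
  rw [Real.exp_neg, inv_inv] at hinv
  refine hinv.congr fun n => ?_
  rw [div_mul_eq_div_div, div_self (by positivity), one_div]
end

section
/- For all n ≥ 1, (∑_{k=0}^{n+1} (k+1)! · C(n+1, k)) / ((n+1)·(n+1)!) = ∑_{k=0}^{n+1} (n+2-k) / ((n+1) · k!) as rational numbers. -/
/-! After reflecting `k ↦ m - k` the identity holds term by term, because
`C(m, k) · (m - k)! = m! / k!`. -/

open Finset Nat

theorem factorial_succ_sub_mul_choose_sub {K : Type*} [Field K] [CharZero K] {m k : ℕ}
    (hk : k ≤ m) :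
    ((m - k + 1)! : K) * m.choose (m - k) = ((m : K) + 1 - k) * m ! / k ! := by
  rw [choose_symm hk, cast_choose K hk, factorial_succ, cast_mul, cast_add_one, cast_sub hk]
  have : ((m - k)! : K) ≠ 0 := mod_cast factorial_ne_zero _
  field_simp
  ring

theorem sum_factorial_succ_mul_choose {K : Type*} [Field K] [CharZero K] (m : ℕ) :
    ∑ k ∈ range (m + 1), ((k + 1)! : K) * m.choose k =
      ∑ k ∈ range (m + 1), ((m : K) + 1 - k) * m ! / k ! := by
  rw [← sum_range_reflect]
  refine sum_congr rfl fun k hk => ?_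
  rw [add_tsub_cancel_right]
  exact factorial_succ_sub_mul_choose_sub (Nat.lt_succ_iff.mp (mem_range.mp hk))

theorem stmt10 : ∀ n : ℕ, 1 ≤ n →
    (∑ k ∈ Finset.range (n + 2), (Nat.factorial (k + 1) : ℚ) * (Nat.choose (n + 1) k : ℚ)) /
        (((n : ℚ) + 1) * (Nat.factorial (n + 1) : ℚ)) =
      ∑ k ∈ Finset.range (n + 2), ((n : ℚ) + 2 - (k : ℚ)) /
        (((n : ℚ) + 1) * (Nat.factorial k : ℚ)) := by
  intro n _
  rw [sum_factorial_succ_mul_choose, sum_div]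
  refine sum_congr rfl fun k _ => ?_
  push_cast
  field_simp
  ring
end
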